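/- Let x_0 = a_0·p^{b_0·p^{k_0}} be in standard form and suppose x_0 is a primitive anti-partial derivative of y = D_p(x_0) (i.e., no anti-partial derivative of y in standard form has a smaller exponent k). Define C = {c ∈ [0, b_0) ∩ ℤ : p^{p^{k_0}·c} exactly divides b_0 − c, and (b_0 − c)/p^{p^{k_0}·c} divides a_0·b_0}. Then the map sending c ∈ C to x = a·p^{b·p^k}, where k = p^{k_0}·c + k_0, b = (b_0 − c)/p^{p^{k_0}·c}, and a = a_0·b_0/b, is a bijection from C onto the set of all integral anti-partial derivatives of y. -/

import Mathlib

def Dp (p : ℕ) (x : ℤ) : ℤ := (x / p) * padicValInt p x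

/-! For `p ∤ a` and `m = b * p ^ k > 0` one has `D_p (a * p ^ m) = a * b * p ^ (k + b * p ^ k - 1)`,
so by unique factorization two standard forms have the same derivative exactly when they agree
in `a * b` and in `k + b * p ^ k`. An anti-derivative `a * p ^ (b * p ^ k)` of `y` thus has
`a * b = a₀ * b₀` and `k + b * p ^ k = k₀ + b₀ * p ^ k₀`. Primitivity gives `k₀ ≤ k`, and then
`p ^ k₀` divides `k - k₀ = p ^ k₀ * c`, the exponent equation becomes
`b * p ^ (p ^ k₀ * c) + c = b₀`, and this `c` is the unique index in `C` producing the
anti-derivative. -/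

section Exponents

variable {p b b₀ c k k₀ J : ℕ}

lemma add_mul_pow_eq_iff (hp : 0 < p) :
    p ^ k₀ * c + k₀ + b * p ^ (p ^ k₀ * c + k₀) = k₀ + b₀ * p ^ k₀ ↔
      b * p ^ (p ^ k₀ * c) + c = b₀ := by
  rw [pow_add, ← mul_assoc]
  generalize b * p ^ (p ^ k₀ * c) = X
  have hP : 0 < p ^ k₀ := pow_pos hp k₀
  generalize p ^ k₀ = P at hP ⊢
  rw [show P * c + k₀ + X * P = k₀ + P * (X + c) by ring, mul_comm b₀,
    Nat.add_left_cancel_iff, Nat.mul_left_cancel_iff hP]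

lemma exists_eq_pow_mul_add_of_add_mul_pow_eq (hk : k₀ ≤ k)
    (h : k + b * p ^ k = k₀ + b₀ * p ^ k₀) : ∃ c, k = p ^ k₀ * c + k₀ := by
  obtain ⟨c, hc⟩ : p ^ k₀ ∣ b₀ * p ^ k₀ - b * p ^ k :=
    Nat.dvd_sub (dvd_mul_left _ _) (dvd_mul_of_dvd_right (pow_dvd_pow p hk) b)
  exact ⟨c, by omega⟩

lemma div_pow_pos_and_div_pow_mul_add_eq (hc : c < b₀) (hd : p ^ J ∣ b₀ - c) :
    0 < (b₀ - c) / p ^ J ∧ (b₀ - c) / p ^ J * p ^ J + c = b₀ := by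
  have hbc := Nat.div_mul_cancel hd
  refine ⟨Nat.pos_of_ne_zero fun h => ?_, by omega⟩
  rw [h, zero_mul] at hbc
  omega

lemma exactly_dvd_of_mul_pow_add_eq (hp : 0 < p) (hb : 0 < b) (hpb : ¬ p ∣ b)
    (h : b * p ^ J + c = b₀) :
    c < b₀ ∧ p ^ J ∣ b₀ - c ∧ ¬ p ^ (J + 1) ∣ b₀ - c ∧ (b₀ - c) / p ^ J = b := by
  have hP : 0 < p ^ J := pow_pos hp J
  have hc : c < b₀ := by have := Nat.mul_pos hb hP; omega
  rw [show b₀ - c = p ^ J * b by rw [mul_comm]; omega, pow_succ,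
    Nat.mul_div_cancel_left _ hP, Nat.mul_dvd_mul_iff_left hP]
  exact ⟨hc, dvd_mul_right _ _, hpb, rfl⟩

end Exponents

section Valuation

variable {p : ℕ}

lemma padicValInt_mul_pow_of_not_dvd (hp : p.Prime) {a : ℤ} (ha : ¬ (p : ℤ) ∣ a) (n : ℕ) :
    padicValInt p (a * (p : ℤ) ^ n) = n := by
  have := Fact.mk hp
  have ha0 : a ≠ 0 := by rintro rfl; exact ha (dvd_zero _)
  rw [padicValInt.mul ha0 (pow_ne_zero _ (by exact_mod_cast hp.ne_zero)),
    padicValInt.eq_zero_of_not_dvd ha, ← Nat.cast_pow, padicValInt.of_nat,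
    padicValNat.prime_pow, zero_add]

lemma eq_and_eq_of_mul_pow_eq_mul_pow (hp : p.Prime) {a₁ a₂ : ℤ} {n₁ n₂ : ℕ}
    (h₁ : ¬ (p : ℤ) ∣ a₁) (h₂ : ¬ (p : ℤ) ∣ a₂) (h : a₁ * (p : ℤ) ^ n₁ = a₂ * (p : ℤ) ^ n₂) :
    a₁ = a₂ ∧ n₁ = n₂ := by
  obtain rfl : n₁ = n₂ := by
    simpa [padicValInt_mul_pow_of_not_dvd hp h₁, padicValInt_mul_pow_of_not_dvd hp h₂]
      using congrArg (padicValInt p) h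
  exact ⟨mul_right_cancel₀ (pow_ne_zero _ (by exact_mod_cast hp.ne_zero)) h, rfl⟩

lemma exists_eq_mul_pow_mul_pow (hp : p.Prime) {x : ℤ} (hx : padicValInt p x ≠ 0) :
    ∃ (a : ℤ) (b k : ℕ), ¬ (p : ℤ) ∣ a ∧ 0 < b ∧ ¬ p ∣ b ∧ x = a * (p : ℤ) ^ (b * p ^ k) := by
  have hx0 : x ≠ 0 := by rintro rfl; exact hx padicValInt.zero
  obtain ⟨a, hxa, ha⟩ := (Int.finiteMultiplicity_iff (a := p).mpr
    ⟨by simpa using hp.ne_one, hx0⟩).exists_eq_pow_mul_and_not_dvd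
  generalize multiplicity (p : ℤ) x = m at hxa
  have hm : m ≠ 0 := by rwa [hxa, mul_comm, padicValInt_mul_pow_of_not_dvd hp ha] at hx
  obtain ⟨k, b, hpb, rfl⟩ := Nat.exists_eq_pow_mul_and_not_dvd hm p hp.ne_one
  refine ⟨a, b, k, ha, Nat.pos_of_ne_zero ?_, hpb, by rw [hxa, mul_comm, mul_comm b]⟩
  rintro rfl
  exact hpb (dvd_zero p)

end Valuation

section Derivative

variable {p : ℕ}

lemma padicValInt_ne_zero_of_Dp_ne_zero {x : ℤ} (h : Dp p x ≠ 0) : padicValInt p x ≠ 0 := by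
  intro hv
  simp [Dp, hv] at h

lemma Dp_mul_pow (hp : p.Prime) {a : ℤ} (ha : ¬ (p : ℤ) ∣ a) {m : ℕ} (hm : m ≠ 0) :
    Dp p (a * (p : ℤ) ^ m) = a * m * (p : ℤ) ^ (m - 1) := by
  obtain ⟨n, rfl⟩ := Nat.exists_eq_succ_of_ne_zero hm
  rw [Dp, padicValInt_mul_pow_of_not_dvd hp ha, pow_succ, ← mul_assoc,
    Int.mul_ediv_cancel _ (by exact_mod_cast hp.ne_zero), Nat.succ_sub_one]
  ring

lemma Dp_mul_pow_mul_pow (hp : p.Prime) {a : ℤ} (ha : ¬ (p : ℤ) ∣ a) {b : ℕ} (hb : 0 < b)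
    (k : ℕ) : Dp p (a * (p : ℤ) ^ (b * p ^ k)) = a * b * (p : ℤ) ^ (k + b * p ^ k - 1) := by
  have hm : 0 < b * p ^ k := Nat.mul_pos hb (pow_pos hp.pos k)
  rw [Dp_mul_pow hp ha hm.ne', show k + b * p ^ k - 1 = k + (b * p ^ k - 1) by omega, pow_add]
  push_cast
  ring

lemma Dp_mul_pow_mul_pow_ne_zero (hp : p.Prime) {a : ℤ} {b : ℕ} (h : ¬ (p : ℤ) ∣ a * b)
    (hb : 0 < b) (k : ℕ) : Dp p (a * (p : ℤ) ^ (b * p ^ k)) ≠ 0 := by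
  rw [Dp_mul_pow_mul_pow hp (fun ha => h (ha.mul_right _)) hb]
  exact mul_ne_zero (fun h0 => h (h0 ▸ dvd_zero _)) (pow_ne_zero _ (by exact_mod_cast hp.ne_zero))

lemma Dp_mul_pow_mul_pow_eq_iff (hp : p.Prime) {a₁ a₂ : ℤ} {b₁ b₂ k₁ k₂ : ℕ}
    (h₁ : ¬ (p : ℤ) ∣ a₁ * b₁) (h₂ : ¬ (p : ℤ) ∣ a₂ * b₂) (hb₁ : 0 < b₁) (hb₂ : 0 < b₂) :
    Dp p (a₁ * (p : ℤ) ^ (b₁ * p ^ k₁)) = Dp p (a₂ * (p : ℤ) ^ (b₂ * p ^ k₂)) ↔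
      a₁ * b₁ = a₂ * b₂ ∧ k₁ + b₁ * p ^ k₁ = k₂ + b₂ * p ^ k₂ := by
  rw [Dp_mul_pow_mul_pow hp (fun h => h₁ (h.mul_right _)) hb₁,
    Dp_mul_pow_mul_pow hp (fun h => h₂ (h.mul_right _)) hb₂]
  have := Nat.mul_pos hb₁ (pow_pos hp.pos k₁)
  have := Nat.mul_pos hb₂ (pow_pos hp.pos k₂)
  constructor
  · intro h
    obtain ⟨hab, hexp⟩ := eq_and_eq_of_mul_pow_eq_mul_pow hp h₁ h₂ h
    exact ⟨hab, by omega⟩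
  · rintro ⟨hab, hexp⟩
    rw [hab, hexp]

end Derivative

theorem antiderivatives_bijection_general (p : ℕ) (hp : p.Prime)
    (a₀ : ℤ) (b₀ k₀ : ℕ)
    (ha₀ : ¬ (p : ℤ) ∣ a₀) (hb₀ : 0 < b₀) (hb₀p : ¬ p ∣ b₀)
    -- primitivity: every standard-form anti-partial derivative of y has exponent k ≥ k₀
    (hprim : ∀ (a : ℤ) (b k : ℕ), a ≠ 0 → ¬ (p : ℤ) ∣ a → 0 < b → ¬ p ∣ b →
      Dp p (a * (p : ℤ) ^ (b * p ^ k)) = Dp p (a₀ * (p : ℤ) ^ (b₀ * p ^ k₀)) → k₀ ≤ k) :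
    Set.BijOn
      (fun c : ℕ =>
        (a₀ * b₀ / ((b₀ - c) / p ^ (p ^ k₀ * c) : ℕ)) *
          (p : ℤ) ^ (((b₀ - c) / p ^ (p ^ k₀ * c)) * p ^ (p ^ k₀ * c + k₀)))
      {c : ℕ | c < b₀ ∧ p ^ (p ^ k₀ * c) ∣ (b₀ - c) ∧ ¬ p ^ (p ^ k₀ * c + 1) ∣ (b₀ - c) ∧
        (((b₀ - c) / p ^ (p ^ k₀ * c) : ℕ) : ℤ) ∣ a₀ * b₀}
      {x : ℤ | Dp p x = Dp p (a₀ * (p : ℤ) ^ (b₀ * p ^ k₀))} := by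
  have hp' : Prime (p : ℤ) := Nat.prime_iff_prime_int.mp hp
  have hab₀ : ¬ (p : ℤ) ∣ a₀ * b₀ := hp'.not_dvd_mul ha₀ (by exact_mod_cast hb₀p)
  have hA {b : ℕ} (hdvd : (b : ℤ) ∣ a₀ * b₀) : ¬ (p : ℤ) ∣ a₀ * b₀ / b :=
    fun h => hab₀ (h.trans (Int.ediv_dvd_of_dvd hdvd))
  refine ⟨?mapsTo, ?injOn, ?surjOn⟩
  case mapsTo =>
    rintro c ⟨hc, hd, -, hdvd⟩
    obtain ⟨hb, hbc⟩ := div_pow_pos_and_div_pow_mul_add_eq hc hd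
    have hAb := Int.ediv_mul_cancel hdvd
    exact (Dp_mul_pow_mul_pow_eq_iff hp (by rwa [hAb]) hab₀ hb hb₀).mpr
      ⟨hAb, (add_mul_pow_eq_iff hp.pos).mpr hbc⟩
  case injOn =>
    rintro c₁ ⟨hc₁, hd₁, -, hdvd₁⟩ c₂ ⟨hc₂, hd₂, -, hdvd₂⟩ h
    have hexp₁ := (add_mul_pow_eq_iff hp.pos).mpr (div_pow_pos_and_div_pow_mul_add_eq hc₁ hd₁).2
    have hexp₂ := (add_mul_pow_eq_iff hp.pos).mpr (div_pow_pos_and_div_pow_mul_add_eq hc₂ hd₂).2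
    have hm := (eq_and_eq_of_mul_pow_eq_mul_pow hp (hA hdvd₁) (hA hdvd₂) h).2
    exact Nat.eq_of_mul_eq_mul_left (pow_pos hp.pos k₀) (by omega)
  case surjOn =>
    intro x hx
    have hy := Dp_mul_pow_mul_pow_ne_zero hp hab₀ hb₀ k₀
    obtain ⟨A, b, k, hpA, hb, hpb, rfl⟩ :=
      exists_eq_mul_pow_mul_pow hp (padicValInt_ne_zero_of_Dp_ne_zero (hx ▸ hy))
    have hAb : ¬ (p : ℤ) ∣ A * b := hp'.not_dvd_mul hpA (by exact_mod_cast hpb)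
    obtain ⟨hprod, hexp⟩ := (Dp_mul_pow_mul_pow_eq_iff hp hAb hab₀ hb hb₀).mp hx
    have hk := hprim A b k (fun h => hpA (h ▸ dvd_zero _)) hpA hb hpb hx
    obtain ⟨c, rfl⟩ := exists_eq_pow_mul_add_of_add_mul_pow_eq hk hexp
    obtain ⟨hc, hd, hnd, hq⟩ :=
      exactly_dvd_of_mul_pow_add_eq hp.pos hb hpb ((add_mul_pow_eq_iff hp.pos).mp hexp)
    refine ⟨c, ⟨hc, hd, hnd, by rw [hq]; exact Dvd.intro_left A hprod⟩, ?_⟩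
    simp only [hq]
    rw [← hprod, Int.mul_ediv_cancel _ (by exact_mod_cast hb.ne')]

theorem antiderivatives_bijection (p : ℕ) (hp : p.Prime)
    (a₀ : ℤ) (b₀ k₀ : ℕ)
    (ha₀0 : a₀ ≠ 0) (ha₀ : ¬ (p : ℤ) ∣ a₀) (hb₀ : 0 < b₀) (hb₀p : ¬ p ∣ b₀)
    -- primitivity: every standard-form anti-partial derivative of y has exponent k ≥ k₀
    (hprim : ∀ (a : ℤ) (b k : ℕ), a ≠ 0 → ¬ (p : ℤ) ∣ a → 0 < b → ¬ p ∣ b →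
      Dp p (a * (p : ℤ) ^ (b * p ^ k)) = Dp p (a₀ * (p : ℤ) ^ (b₀ * p ^ k₀)) → k₀ ≤ k) :
    Set.BijOn
      (fun c : ℕ =>
        (a₀ * b₀ / ((b₀ - c) / p ^ (p ^ k₀ * c) : ℕ)) *
          (p : ℤ) ^ (((b₀ - c) / p ^ (p ^ k₀ * c)) * p ^ (p ^ k₀ * c + k₀)))
      {c : ℕ | c < b₀ ∧ p ^ (p ^ k₀ * c) ∣ (b₀ - c) ∧ ¬ p ^ (p ^ k₀ * c + 1) ∣ (b₀ - c) ∧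
        (((b₀ - c) / p ^ (p ^ k₀ * c) : ℕ) : ℤ) ∣ a₀ * b₀}
      {x : ℤ | Dp p x = Dp p (a₀ * (p : ℤ) ^ (b₀ * p ^ k₀))} :=
  antiderivatives_bijection_general p hp a₀ b₀ k₀ ha₀ hb₀ hb₀p hprim
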